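/- The Four Colour Theorem is equivalent to the statement: for every connected, bridgeless plane graph G there exists A ⊆ E(G) such that χ((G^{τ(A)})*;4) ≠ 0, where G^{τ(A)} is the partial Petrial of G and (·)* the geometric dual. -/

import Mathlib

open Polynomial

namespace Penrose

/-- Addition in the Klein four-group `Bool × Bool` (componentwise xor). -/
def kAdd (p q : Bool × Bool) : Bool × Bool := (xor p.1 q.1, xor p.2 q.2)

lemma kAdd_eq_zero_iff : ∀ p q : Bool × Bool, kAdd p q = (false, false) ↔ p = q := by decide
lemma kAdd_eq_right_iff : ∀ p q : Bool × Bool, kAdd p q = q ↔ p = (false, false) := by decide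
lemma kAdd_kAdd : ∀ p q : Bool × Bool, kAdd (kAdd p q) q = p := by decide

/-- The flags (corner triples) of a ribbon graph with edge set `E`: each edge carries
four flags. -/
abbrev Flags (E : Type) := E × Bool × Bool

/-- A ribbon graph (cellularly embedded graph, possibly non-orientable) with edge set `E`,
in the flag (graph-encoded map) model.  The involution `σ0` (crossing edge `e`) acts on the
four flags of `e` by adding `a e` in the Klein four-group, the involution `σ2` (switching
sides of `e`) by adding `b e`, and the fixed-point-free involution `s1` (moving to the
adjacent edge-end in the same vertex-face corner) is given as data.
Vertices are the orbits of `⟨s1, σ2⟩`, edges the orbits of `⟨σ0, σ2⟩`, and the faces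
(boundary components) the orbits of `⟨σ0, s1⟩`. -/
structure RibbonGraph (E : Type) where
  s1 : Flags E → Flags E
  s1_invol : ∀ f, s1 (s1 f) = f
  s1_ne : ∀ f, s1 f ≠ f
  a : E → Bool × Bool
  b : E → Bool × Bool
  a_ne : ∀ e, a e ≠ (false, false)
  b_ne : ∀ e, b e ≠ (false, false)
  ab_ne : ∀ e, a e ≠ b e

namespace RibbonGraph

variable {E : Type}

/-- The involution crossing an edge. -/
def σ0 (G : RibbonGraph E) (f : Flags E) : Flags E := (f.1, kAdd f.2 (G.a f.1))

/-- The involution changing the side (face) of an edge, staying at the same vertex. -/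
def σ2 (G : RibbonGraph E) (f : Flags E) : Flags E := (f.1, kAdd f.2 (G.b f.1))

lemma σ2_σ2 (G : RibbonGraph E) (f : Flags E) : G.σ2 (G.σ2 f) = f := by
  cases f with
  | mk e p => simp [σ2, kAdd_kAdd]

/-- The partial Petrial `G^{τ(A)}`: give a half-twist to every edge in `A`
(replace `σ0` by `σ0 σ2` on the flags of the edges of `A`). -/
def petrial [DecidableEq E] (G : RibbonGraph E) (A : Finset E) : RibbonGraph E where
  s1 := G.s1
  s1_invol := G.s1_invol
  s1_ne := G.s1_ne
  a := fun e => if e ∈ A then kAdd (G.a e) (G.b e) else G.a e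
  b := G.b
  a_ne := by
    intro e
    by_cases h : e ∈ A
    · simpa [h, kAdd_eq_zero_iff] using G.ab_ne e
    · simpa [h] using G.a_ne e
  b_ne := G.b_ne
  ab_ne := by
    intro e
    by_cases h : e ∈ A
    · simpa [h, kAdd_eq_right_iff] using G.a_ne e
    · simpa [h] using G.ab_ne e

/-- The partial dual `G^{δ(A)}`: swap the roles of `σ0` and `σ2` on the flags of the
edges of `A`. -/
def pdual [DecidableEq E] (G : RibbonGraph E) (A : Finset E) : RibbonGraph E where
  s1 := G.s1
  s1_invol := G.s1_invol
  s1_ne := G.s1_ne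
  a := fun e => if e ∈ A then G.b e else G.a e
  b := fun e => if e ∈ A then G.a e else G.b e
  a_ne := by
    intro e
    by_cases h : e ∈ A
    · simpa [h] using G.b_ne e
    · simpa [h] using G.a_ne e
  b_ne := by
    intro e
    by_cases h : e ∈ A
    · simpa [h] using G.a_ne e
    · simpa [h] using G.b_ne e
  ab_ne := by
    intro e
    by_cases h : e ∈ A
    · simpa [h] using (G.ab_ne e).symm
    · simpa [h] using G.ab_ne e

/-- One step of the boundary (face) walk. -/
def faceStep (G : RibbonGraph E) (x y : Flags E) : Prop := y = G.σ0 x ∨ y = G.s1 x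

/-- The number of faces (boundary components) of `G`. -/
noncomputable def nFaces (G : RibbonGraph E) : ℕ := Nat.card (Quot G.faceStep)

/-- One step of the walk around a vertex. -/
def vertStep (G : RibbonGraph E) (x y : Flags E) : Prop := y = G.σ2 x ∨ y = G.s1 x

/-- The number of vertices of `G`. -/
noncomputable def nVerts (G : RibbonGraph E) : ℕ := Nat.card (Quot G.vertStep)

/-- The number of edges of `G`. -/
noncomputable def nEdges (_G : RibbonGraph E) : ℕ := Nat.card E

/-- One step of a walk in (the total space of) `G`. -/
def compStep (G : RibbonGraph E) (x y : Flags E) : Prop :=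
  y = G.σ0 x ∨ y = G.σ2 x ∨ y = G.s1 x

/-- The number of connected components of `G`. -/
noncomputable def nComps (G : RibbonGraph E) : ℕ := Nat.card (Quot G.compStep)

/-- Two flags lie at the same vertex. -/
def VertexConn (G : RibbonGraph E) : Flags E → Flags E → Prop := Relation.EqvGen G.vertStep

/-- `G` is connected. -/
def Connected (G : RibbonGraph E) : Prop := ∀ x y : Flags E, Relation.EqvGen G.compStep x y

/-- `G` is cubic: every vertex has exactly three edge-ends, i.e. six flags. -/
def Cubic (G : RibbonGraph E) : Prop :=
  ∀ x : Flags E, Nat.card {y : Flags E // G.VertexConn x y} = 6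

/-- `G` is orientable. -/
def Orientable (G : RibbonGraph E) : Prop :=
  ∃ o : Flags E → Bool, ∀ f, o (G.σ0 f) = !(o f) ∧ o (G.σ2 f) = !(o f) ∧ o (G.s1 f) = !(o f)

/-- `G` is a plane graph: orientable and of total genus `0` (Euler's formula). -/
def Plane (G : RibbonGraph E) : Prop :=
  G.Orientable ∧ G.nVerts + G.nFaces = G.nEdges + 2 * G.nComps

/-- `G` is checkerboard colourable: its faces admit a proper 2-colouring. -/
def CheckerboardColourable (G : RibbonGraph E) : Prop :=
  ∃ c : Flags E → Bool, ∀ f, c (G.σ0 f) = c f ∧ c (G.s1 f) = c f ∧ c (G.σ2 f) = !(c f)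

/-- The (topological) Penrose polynomial
`P(G;λ) = ∑_{A ⊆ E(G)} (−1)^{|A|} λ^{f(G^{τ(A)})}`. -/
noncomputable def penrose [Fintype E] [DecidableEq E] (G : RibbonGraph E) : Polynomial ℤ :=
  ∑ A ∈ (Finset.univ : Finset E).powerset,
    (-1 : Polynomial ℤ) ^ A.card * X ^ (G.petrial A).nFaces

/-- The boundary-crossing involution of `G − e`: pass through the deleted edge `e`
via `σ2`, and cross any other edge via `σ0`. -/
def delσ0 [DecidableEq E] (G : RibbonGraph E) (e : E) (f : Flags E) : Flags E :=
  if f.1 = e then G.σ2 f else G.σ0 f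

/-- One step of the boundary walk of `G − e`. -/
def faceStepDel [DecidableEq E] (G : RibbonGraph E) (e : E) (x y : Flags E) : Prop :=
  y = G.delσ0 e x ∨ y = G.s1 x

/-- The number of faces (boundary components) of `G − e`. -/
noncomputable def nFacesDel [DecidableEq E] (G : RibbonGraph E) (e : E) : ℕ :=
  Nat.card (Quot (G.faceStepDel e))

/-- The Penrose polynomial `P(G − e; λ)` of the graph obtained from `G` by deleting the
edge `e`. -/
noncomputable def penroseDel [Fintype E] [DecidableEq E] (G : RibbonGraph E) (e : E) :
    Polynomial ℤ :=
  ∑ A ∈ ((Finset.univ : Finset E).erase e).powerset,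
    (-1 : Polynomial ℤ) ^ A.card * X ^ ((G.petrial A).nFacesDel e)

/-- The Penrose polynomial `P(G/e; λ)` of the contraction `G/e := G^{δ(e)} − e`. -/
noncomputable def penroseContr [Fintype E] [DecidableEq E] (G : RibbonGraph E) (e : E) :
    Polynomial ℤ :=
  (G.pdual {e}).penroseDel e

/-- One step of a walk in `G − e` (together with the leftover vertices of `e`). -/
def compStepDel (G : RibbonGraph E) (e : E) (x y : Flags E) : Prop :=
  (x.1 ≠ e ∧ y = G.σ0 x) ∨ y = G.σ2 x ∨ y = G.s1 x

/-- The number of connected components of `G − e`. -/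
noncomputable def nCompsDel (G : RibbonGraph E) (e : E) : ℕ :=
  Nat.card (Quot (G.compStepDel e))

/-- The edge `e` is a bridge of `G`: deleting it increases the number of connected
components. -/
def IsBridge (G : RibbonGraph E) (e : E) : Prop := G.nComps < G.nCompsDel e

/-- The edge `e` is a non-twisted loop bounding a 2-cell (a trivial loop): one of its
sides is a face traversing only `e`, once. -/
def IsTrivialLoop (G : RibbonGraph E) (e : E) : Prop :=
  ∃ p : Bool × Bool, G.s1 (e, p) = G.σ0 (e, p)

/-- Isomorphism (equivalence) of ribbon graphs over the same edge set. -/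
def IsIso (G H : RibbonGraph E) : Prop :=
  ∃ ψ : Flags E ≃ Flags E, (∀ f, ψ (G.s1 f) = H.s1 (ψ f)) ∧
    (∀ f, ψ (G.σ0 f) = H.σ0 (ψ f)) ∧ (∀ f, ψ (G.σ2 f) = H.σ2 (ψ f))

/-- Given a Penrose state `σ` of the medial graph `G_m` (a choice, at the medial vertex
`v_e` of each edge `e` of `G`, of the crossing transition if `σ e = true` and of the white
split otherwise), the transition used at `v_e` by the closed curves of the state. -/
def stateσ0 (G : RibbonGraph E) (σ : E → Bool) (f : Flags E) : Flags E :=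
  if σ f.1 then G.σ0 (G.σ2 f) else G.σ0 f

/-- The number `c(s)` of closed curves of the Penrose state `σ` of the medial graph. -/
noncomputable def stateCurves (G : RibbonGraph E) (σ : E → Bool) : ℕ :=
  Nat.card (Quot (fun x y : Flags E => y = G.stateσ0 σ x ∨ y = G.s1 x))

/-- A `k`-valuation of the medial graph `G_m`: an edge colouring of `G_m` (edges of `G_m`
correspond to `s1`-orbits of flags of `G`). -/
def IsValuation {n : ℕ} (G : RibbonGraph E) (c : Flags E → Fin n) : Prop :=
  ∀ f, c (G.s1 f) = c f

/-- The medial vertex `v_e` is total in the valuation `c`: all four incident medial edges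
receive the same colour. -/
def TotalAt {n : ℕ} (G : RibbonGraph E) (c : Flags E → Fin n) (e : E) : Prop :=
  ∀ p q : Bool × Bool, c (e, p) = c (e, q)

/-- The medial vertex `v_e` has white-split type with two distinct colours. -/
def WhiteAt {n : ℕ} (G : RibbonGraph E) (c : Flags E → Fin n) (e : E) : Prop :=
  (∀ p : Bool × Bool, c (G.σ0 (e, p)) = c (e, p)) ∧
    c (e, (false, false)) ≠ c (G.σ2 (e, (false, false)))

/-- The medial vertex `v_e` has crossing type with two distinct colours. -/
def CrossAt {n : ℕ} (G : RibbonGraph E) (c : Flags E → Fin n) (e : E) : Prop :=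
  (∀ p : Bool × Bool, c (G.σ0 (G.σ2 (e, p))) = c (e, p)) ∧
    c (e, (false, false)) ≠ c (G.σ0 (e, (false, false)))

/-- An admissible valuation: at every medial vertex the two monochromatic pairs have
distinct colours and form a white split or a crossing. -/
def Admissible {n : ℕ} (G : RibbonGraph E) (c : Flags E → Fin n) : Prop :=
  G.IsValuation c ∧ ∀ e : E, G.WhiteAt c e ∨ G.CrossAt c e

/-- A permissible valuation: every medial vertex is of white-split, crossing or total
type. -/
def Permissible {n : ℕ} (G : RibbonGraph E) (c : Flags E → Fin n) : Prop :=
  G.IsValuation c ∧ ∀ e : E, G.WhiteAt c e ∨ G.CrossAt c e ∨ G.TotalAt c e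

/-- The number of crossing-type medial vertices of a valuation. -/
noncomputable def crCount {n : ℕ} (G : RibbonGraph E) (c : Flags E → Fin n) : ℕ :=
  Nat.card {e : E // G.CrossAt c e}

/-- The number of total medial vertices of a valuation. -/
noncomputable def totCount {n : ℕ} (G : RibbonGraph E) (c : Flags E → Fin n) : ℕ :=
  Nat.card {e : E // G.TotalAt c e}

/-- A proper edge 3-colouring of `G`: edges meeting at a vertex get distinct colours. -/
def ProperEdge3Coloring (G : RibbonGraph E) (κ : E → Fin 3) : Prop :=
  ∀ e e' : E, e ≠ e' →
    (∃ p q : Bool × Bool, G.VertexConn (e, p) (e', q)) → κ e ≠ κ e'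

/-- The circuit partition polynomial `j(G_m^P ; x)` of the Penrose directed medial graph
of an oriented checkerboard coloured graph `G`: its states are exactly the Penrose states
of `G_m`, so `j(G_m^P ; x) = ∑_s x^{c(s)} = ∑_{A ⊆ E(G)} x^{f(G^{τ(A)})}`. -/
noncomputable def circuitPartitionMedial [Fintype E] [DecidableEq E] (G : RibbonGraph E) :
    Polynomial ℤ :=
  ∑ A ∈ (Finset.univ : Finset E).powerset, X ^ (G.petrial A).nFaces

/-- The faces of `G`, i.e. the vertices of the geometric dual `G*`. -/
def Face (G : RibbonGraph E) := Quot G.faceStep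

instance [Finite E] (G : RibbonGraph E) : Finite (Face G) :=
  Finite.of_surjective (Quot.mk _) (fun q => Quot.exists_rep q)

/-- The underlying simple graph of the geometric dual `G*`: vertices are the faces of `G`,
two distinct faces being adjacent when they share an edge. -/
def dualGraph (G : RibbonGraph E) : SimpleGraph (Face G) where
  Adj x y := x ≠ y ∧ ∃ g : Flags E, x = Quot.mk _ g ∧ y = Quot.mk _ (G.σ2 g)
  symm := by
    constructor
    rintro x y ⟨hxy, g, hx, hy⟩
    exact ⟨Ne.symm hxy, G.σ2 g, hy, by rw [σ2_σ2]; exact hx⟩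
  loopless := by constructor; rintro x ⟨h, -⟩; exact h rfl

/-- The chromatic polynomial of a finite simple graph, via Whitney's rank expansion:
`χ(H;λ) = ∑_{S ⊆ E(H)} (−1)^{|S|} λ^{c(S)}`, where `c(S)` is the number of connected
components of the spanning subgraph with edge set `S`. -/
noncomputable def chromPoly {V : Type} [Finite V] (H : SimpleGraph V) : Polynomial ℤ := by
  classical
  haveI := Fintype.ofFinite V
  exact ∑ S ∈ ((Finset.univ : Finset (Sym2 V)).filter (· ∈ H.edgeSet)).powerset,
    (-1 : Polynomial ℤ) ^ S.card * X ^ (Nat.card (Quot (fun x y : V => s(x, y) ∈ S)))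

/-- The chromatic polynomial `χ(G*; λ)` of the geometric dual of `G` (as a multigraph:
it is `0` when `G*` has a loop, i.e. when some edge of `G` has the same face on both of
its sides, and otherwise it is the chromatic polynomial of the underlying simple graph
of `G*`). -/
noncomputable def dualChrom [Finite E] (G : RibbonGraph E) : Polynomial ℤ := by
  classical
  exact if ∃ g : Flags E, Quot.mk G.faceStep (G.σ2 g) = Quot.mk G.faceStep g then 0
    else chromPoly G.dualGraph


/-! ### Auxiliary machinery for `stmt19` -/

section Aux

open Matrix

instance quotFiniteAux {α : Type*} [Finite α] (r : α → α → Prop) : Finite (Quot r) :=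
  Finite.of_surjective (Quot.mk _) (fun q => Quot.exists_rep q)

/-- The chromatic polynomial, evaluated at `n`, counts proper `n`-colourings. -/
lemma chromPoly_eval {V : Type} [Finite V] (H : SimpleGraph V) (n : ℕ) :
    (chromPoly H).eval (n : ℤ) =
      (Nat.card {c : V → Fin n // ∀ v w, H.Adj v w → c v ≠ c w} : ℤ) := by
  classical
  haveI := Fintype.ofFinite V
  have key : ∀ PP : Finset (Sym2 V), (∀ s, s ∈ PP ↔ s ∈ H.edgeSet) →
      (∑ S ∈ PP.powerset,
        (-1 : ℤ) ^ S.card * (n : ℤ) ^ (Nat.card (Quot fun x y : V => s(x, y) ∈ S))) =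
      (Nat.card {c : V → Fin n // ∀ v w, H.Adj v w → c v ≠ c w} : ℤ) := by
    intro PP hPP
    have hmono : ∀ S : Finset (Sym2 V),
        ((n : ℤ)) ^ (Nat.card (Quot fun x y : V => s(x, y) ∈ S)) =
          ∑ c : V → Fin n, (if ∀ x y : V, s(x, y) ∈ S → c x = c y then (1 : ℤ) else 0) := by
      intro S
      have e1 : {c : V → Fin n // ∀ x y : V, s(x, y) ∈ S → c x = c y} ≃
          ((Quot fun x y : V => s(x, y) ∈ S) → Fin n) :=
        { toFun := fun c => Quot.lift c.1 (fun x y hr => c.2 x y hr)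
          invFun := fun g => ⟨g ∘ Quot.mk _, fun x y hr => congrArg g (Quot.sound hr)⟩
          left_inv := fun c => by ext x; rfl
          right_inv := fun g => by
            funext q
            induction q using Quot.ind with
            | _ x => rfl }
      have h1 : Nat.card {c : V → Fin n // ∀ x y : V, s(x, y) ∈ S → c x = c y} =
          n ^ Nat.card (Quot fun x y : V => s(x, y) ∈ S) := by
        rw [Nat.card_congr e1, Nat.card_fun, Nat.card_eq_fintype_card (α := Fin n),
          Fintype.card_fin]
      rw [Finset.sum_boole, ← Nat.cast_pow]
      congr 1
      rw [← h1, Nat.card_eq_fintype_card, Fintype.card_subtype]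
    rw [Finset.sum_congr rfl (fun S _ => by rw [hmono S])]
    rw [Finset.sum_congr rfl (fun S _ => Finset.mul_sum _ _ _), Finset.sum_comm]
    have hinner : ∀ c : V → Fin n,
        (∑ S ∈ PP.powerset,
          (-1 : ℤ) ^ S.card * (if ∀ x y : V, s(x, y) ∈ S → c x = c y then (1 : ℤ) else 0)) =
        (if ∀ v w : V, H.Adj v w → c v ≠ c w then (1 : ℤ) else 0) := by
      intro c
      have hcond : ∀ S : Finset (Sym2 V),
          (∀ x y : V, s(x, y) ∈ S → c x = c y) ↔
            (∀ s ∈ S, ∀ x y : V, s = s(x, y) → c x = c y) := by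
        intro S
        constructor
        · intro h s hs
          induction s using Sym2.ind with
          | _ x y => intro x' y' he; rw [he] at hs; exact h x' y' hs
        · intro h x y hxy
          exact h _ hxy x y rfl
      have hps : PP.powerset.filter (fun S => ∀ x y : V, s(x, y) ∈ S → c x = c y) =
          (PP.filter (fun s => ∀ x y : V, s = s(x, y) → c x = c y)).powerset := by
        ext S
        simp only [Finset.mem_filter, Finset.mem_powerset, Finset.subset_iff]
        constructor
        · rintro ⟨h1, h2⟩
          intro s hs
          exact ⟨h1 hs, (hcond S).1 h2 s hs⟩
        · intro h
          have h' : ∀ s, s ∈ S → s ∈ PP ∧ ∀ x y : V, s = s(x, y) → c x = c y := by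
            intro s hs
            exact h hs
          exact ⟨fun {s} hs => (h' s hs).1, (hcond S).2 (fun s hs => (h' s hs).2)⟩
      rw [Finset.sum_congr rfl
        (fun S _ => (mul_ite _ _ _ _).trans (by rw [mul_one, mul_zero]))]
      rw [← Finset.sum_filter]
      rw [hps, Finset.sum_powerset_neg_one_pow_card]
      have hiff : (Finset.filter (fun s => ∀ x y : V, s = s(x, y) → c x = c y) PP = ∅) ↔
          (∀ v w : V, H.Adj v w → c v ≠ c w) := by
        rw [Finset.filter_eq_empty_iff]
        constructor
        · intro h v w hadj hcvw
          refine h ((hPP s(v, w)).2 (H.mem_edgeSet.2 hadj)) (fun x y he => ?_)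
          rcases Sym2.eq_iff.1 he with ⟨rfl, rfl⟩ | ⟨rfl, rfl⟩
          · exact hcvw
          · exact hcvw.symm
        · intro h s hs
          have hs' : s ∈ H.edgeSet := (hPP _).1 hs
          induction s using Sym2.ind with
          | _ v w =>
            intro hmcs
            exact h v w (H.mem_edgeSet.1 hs') (hmcs v w rfl)
      simp only [hiff]
    rw [Finset.sum_congr rfl (fun c _ => hinner c)]
    rw [Finset.sum_boole, Nat.card_eq_fintype_card, Fintype.card_subtype]
  rw [chromPoly]
  rw [Polynomial.eval_finset_sum]
  simp only [Polynomial.eval_mul, Polynomial.eval_pow, Polynomial.eval_neg,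
    Polynomial.eval_one, Polynomial.eval_X]
  exact key _ (fun s => by simp)


lemma petrial_empty [DecidableEq E] (G : RibbonGraph E) : G.petrial ∅ = G := by
  cases G with
  | mk s1 h1 h2 a b ha hb hab =>
    unfold petrial
    congr

/-- A proper face `4`-colouring of `G` makes `χ(G^*;4)` nonzero. -/
lemma dualChrom_ne_zero_of_colouring [Fintype E] (G : RibbonGraph E)
    (hc : ∃ c : Flags E → Fin 4,
      ∀ f, c (G.σ0 f) = c f ∧ c (G.s1 f) = c f ∧ c (G.σ2 f) ≠ c f) :
    (G.dualChrom).eval 4 ≠ 0 := by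
  classical
  obtain ⟨c, hc⟩ := hc
  have hstep : ∀ x y : Flags E, G.faceStep x y → c x = c y := by
    rintro x y (rfl | rfl)
    · exact (hc x).1.symm
    · exact ((hc x).2.1).symm
  set colF : Face G → Fin 4 := Quot.lift c hstep with hcolF
  have hnl : ¬ ∃ g : Flags E, Quot.mk G.faceStep (G.σ2 g) = Quot.mk G.faceStep g := by
    rintro ⟨g, hg⟩
    have : colF (Quot.mk G.faceStep (G.σ2 g)) = colF (Quot.mk G.faceStep g) := by rw [hg]
    exact (hc g).2.2 this
  rw [dualChrom, if_neg hnl]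
  have hproper : Nonempty {κ : Face G → Fin 4 // ∀ v w, G.dualGraph.Adj v w → κ v ≠ κ w} := by
    refine ⟨⟨colF, ?_⟩⟩
    rintro v w ⟨hne, g, rfl, rfl⟩ hEq
    exact (hc g).2.2 hEq.symm
  have h4 : ((4 : ℕ) : ℤ) = (4 : ℤ) := by norm_num
  rw [← h4, chromPoly_eval]
  exact_mod_cast Nat.card_ne_zero.2 ⟨hproper, inferInstance⟩


/-! #### Klein-group and flag-class helpers -/

lemma kAdd_zero_left : ∀ p : Bool × Bool, kAdd (false, false) p = p := by decide
lemma kAdd_self : ∀ p : Bool × Bool, kAdd p p = (false, false) := by decide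
lemma kAdd_comm' : ∀ p q : Bool × Bool, kAdd p q = kAdd q p := by decide

lemma kcases : ∀ (a b p : Bool × Bool), a ≠ (false, false) → b ≠ (false, false) → a ≠ b →
    p = (false, false) ∨ p = a ∨ p = b ∨ p = kAdd a b := by decide

set_option maxHeartbeats 1000000 in
lemma ksum4 : ∀ (a b : Bool × Bool), a ≠ (false, false) → b ≠ (false, false) → a ≠ b →
    ∀ w : Bool × Bool → ZMod 2,
    ∑ p : Bool × Bool, w p = w (false, false) + w a + w b + w (kAdd a b) := by decide

/-- abstract pairing lemma in the Klein group -/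
lemma kpair {α : Type*} (g : Bool × Bool → α) (inv mv : Bool × Bool)
    (hinv : inv ≠ (false, false)) (hmv : mv ≠ (false, false)) (him : inv ≠ mv)
    (hg : ∀ p, g (kAdd p inv) = g p) :
    ∀ p, (g p = g (false, false) ∧ g (kAdd p mv) = g mv) ∨
      (g p = g mv ∧ g (kAdd p mv) = g (false, false)) := by
  intro p
  rcases kcases inv mv p hinv hmv him with rfl | rfl | rfl | rfl
  · left
    exact ⟨rfl, by rw [kAdd_zero_left]⟩
  · left
    constructor
    · have := hg (false, false)
      rwa [kAdd_zero_left] at this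
    · have := hg mv
      rwa [kAdd_comm'] at this
  · right
    exact ⟨rfl, by rw [kAdd_self]⟩
  · right
    constructor
    · have := hg mv
      rwa [kAdd_comm'] at this
    · have h1 : kAdd (kAdd inv mv) mv = inv := kAdd_kAdd inv mv
      rw [h1]
      have := hg (false, false)
      rwa [kAdd_zero_left] at this

variable {E : Type}

/-- The vertex class of a flag. -/
def vC (G : RibbonGraph E) (x : Flags E) : Quot G.vertStep := Quot.mk _ x

/-- The face class of a flag. -/
def fC (G : RibbonGraph E) (x : Flags E) : Face G := Quot.mk _ x

lemma vC_σ2 (G : RibbonGraph E) (x : Flags E) : G.vC (G.σ2 x) = G.vC x :=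
  (Quot.sound (show G.vertStep x (G.σ2 x) from Or.inl rfl)).symm

lemma vC_s1 (G : RibbonGraph E) (x : Flags E) : G.vC (G.s1 x) = G.vC x :=
  (Quot.sound (show G.vertStep x (G.s1 x) from Or.inr rfl)).symm

lemma fC_σ0 (G : RibbonGraph E) (x : Flags E) : G.fC (G.σ0 x) = G.fC x :=
  (Quot.sound (show G.faceStep x (G.σ0 x) from Or.inl rfl)).symm

lemma fC_s1 (G : RibbonGraph E) (x : Flags E) : G.fC (G.s1 x) = G.fC x :=
  (Quot.sound (show G.faceStep x (G.s1 x) from Or.inr rfl)).symm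

lemma vC_addb (G : RibbonGraph E) (e : E) (p : Bool × Bool) :
    G.vC (e, kAdd p (G.b e)) = G.vC (e, p) := G.vC_σ2 (e, p)

lemma fC_adda (G : RibbonGraph E) (e : E) (p : Bool × Bool) :
    G.fC (e, kAdd p (G.a e)) = G.fC (e, p) := G.fC_σ0 (e, p)

/-- Classification of the vertex classes of the four flags of an edge. -/
lemma vC_pair (G : RibbonGraph E) (e : E) :
    ∀ p, (G.vC (e, p) = G.vC (e, (false, false)) ∧
            G.vC (e, kAdd p (G.a e)) = G.vC (e, G.a e)) ∨
      (G.vC (e, p) = G.vC (e, G.a e) ∧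
            G.vC (e, kAdd p (G.a e)) = G.vC (e, (false, false))) :=
  kpair (fun p => G.vC (e, p)) (G.b e) (G.a e) (G.b_ne e) (G.a_ne e) (Ne.symm (G.ab_ne e))
    (fun p => G.vC_addb e p)

/-- Classification of the face classes of the four flags of an edge. -/
lemma fC_pair (G : RibbonGraph E) (e : E) :
    ∀ p, (G.fC (e, p) = G.fC (e, (false, false)) ∧
            G.fC (e, kAdd p (G.b e)) = G.fC (e, G.b e)) ∨
      (G.fC (e, p) = G.fC (e, G.b e) ∧
            G.fC (e, kAdd p (G.b e)) = G.fC (e, (false, false))) :=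
  kpair (fun p => G.fC (e, p)) (G.a e) (G.b e) (G.a_ne e) (G.b_ne e) (G.ab_ne e)
    (fun p => G.fC_adda e p)

/-- Summing an `s1`-invariant function over all flags gives `0` over `ZMod 2`. -/
lemma s1_sum_zero [Fintype E] (G : RibbonGraph E) (u : Flags E → ZMod 2)
    (hu : ∀ x, u (G.s1 x) = u x) : ∑ x : Flags E, u x = 0 := by
  refine Finset.sum_ninvolution G.s1 ?_ (fun x _ => G.s1_ne x) (fun x => Finset.mem_univ _)
    G.s1_invol
  intro x
  rw [hu x, ← two_mul]
  rw [show ((2 : ZMod 2)) = 0 by decide, zero_mul]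


lemma z2_add_eq_zero : ∀ a b : ZMod 2, a + b = 0 ↔ a = b := by decide
lemma z2_add_self : ∀ a : ZMod 2, a + a = 0 := by decide

lemma σ0_00 (G : RibbonGraph E) (e : E) : G.σ0 (e, (false, false)) = (e, G.a e) := by
  show (e, kAdd (false, false) (G.a e)) = (e, G.a e)
  rw [kAdd_zero_left]

lemma σ2_00 (G : RibbonGraph E) (e : E) : G.σ2 (e, (false, false)) = (e, G.b e) := by
  show (e, kAdd (false, false) (G.b e)) = (e, G.b e)
  rw [kAdd_zero_left]

/-- The core linear-algebra lemma: the Euler inequality for connected ribbon graphs,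
together with the existence of face potentials for flows when Euler equality holds. -/
lemma potential_core [Fintype E] (G : RibbonGraph E) (hconn : G.Connected)
    (hE : Nonempty E) :
    G.nVerts + G.nFaces ≤ G.nEdges + 2 ∧
    (G.nVerts + G.nFaces = G.nEdges + 2 → ∀ δ : E → ZMod 2,
      (∀ a : Quot G.vertStep → ZMod 2,
        ∑ e : E, δ e * (a (G.vC (e, (false, false))) +
          a (G.vC (G.σ0 (e, (false, false))))) = 0) →
      ∃ c : Face G → ZMod 2, ∀ e : E,
        c (G.fC (e, (false, false))) + c (G.fC (G.σ2 (e, (false, false)))) = δ e) := by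
  classical
  obtain ⟨e₀⟩ := hE
  letI : Fintype (Quot G.vertStep) := Fintype.ofFinite _
  letI : Fintype (Face G) := Fintype.ofFinite _
  set M : Matrix E (Quot G.vertStep) (ZMod 2) := fun e v =>
    (if G.vC (e, (false, false)) = v then 1 else 0) +
      (if G.vC (G.σ0 (e, (false, false))) = v then 1 else 0) with hM
  set N : Matrix E (Face G) (ZMod 2) := fun e f =>
    (if G.fC (e, (false, false)) = f then 1 else 0) +
      (if G.fC (G.σ2 (e, (false, false))) = f then 1 else 0) with hN
  have hMv : ∀ (a : Quot G.vertStep → ZMod 2) (e : E),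
      M.mulVec a e = a (G.vC (e, (false, false))) + a (G.vC (G.σ0 (e, (false, false)))) := by
    intro a e
    simp only [hM, Matrix.mulVec, dotProduct, add_mul, Finset.sum_add_distrib,
      ite_mul, one_mul, zero_mul, Finset.sum_ite_eq, Finset.mem_univ, if_true]
  have hNv : ∀ (c : Face G → ZMod 2) (e : E),
      N.mulVec c e = c (G.fC (e, (false, false))) + c (G.fC (G.σ2 (e, (false, false)))) := by
    intro c e
    simp only [hN, Matrix.mulVec, dotProduct, add_mul, Finset.sum_add_distrib,
      ite_mul, one_mul, zero_mul, Finset.sum_ite_eq, Finset.mem_univ, if_true]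
  -- kernel of the vertex map consists of the constant functions
  have hvconst : ∀ a : Quot G.vertStep → ZMod 2, M.mulVec a = 0 →
      ∀ x y : Flags E, a (G.vC x) = a (G.vC y) := by
    intro a ha x y
    have hstep : ∀ z : Flags E, a (G.vC (G.σ0 z)) = a (G.vC z) := by
      rintro ⟨e, p⟩
      have h0 : a (G.vC (e, (false, false))) + a (G.vC (e, G.a e)) = 0 := by
        have := congrFun ha e
        rw [hMv a e, G.σ0_00 e] at this
        exact this
      have h0' : a (G.vC (e, (false, false))) = a (G.vC (e, G.a e)) :=
        (z2_add_eq_zero _ _).1 h0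
      show a (G.vC (e, kAdd p (G.a e))) = a (G.vC (e, p))
      rcases G.vC_pair e p with ⟨h1, h2⟩ | ⟨h1, h2⟩
      · rw [h1, h2, h0']
      · rw [h1, h2, h0']
    have hcomp := hconn x y
    induction hcomp with
    | rel u v h =>
      rcases h with rfl | rfl | rfl
      · exact (hstep u).symm
      · rw [G.vC_σ2]
      · rw [G.vC_s1]
    | refl u => rfl
    | symm u v _ ih => exact ih.symm
    | trans u v w _ _ ih1 ih2 => exact ih1.trans ih2
  have hfconst : ∀ c : Face G → ZMod 2, N.mulVec c = 0 →
      ∀ x y : Flags E, c (G.fC x) = c (G.fC y) := by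
    intro c hc x y
    have hstep : ∀ z : Flags E, c (G.fC (G.σ2 z)) = c (G.fC z) := by
      rintro ⟨e, p⟩
      have h0 : c (G.fC (e, (false, false))) + c (G.fC (e, G.b e)) = 0 := by
        have := congrFun hc e
        rw [hNv c e, G.σ2_00 e] at this
        exact this
      have h0' : c (G.fC (e, (false, false))) = c (G.fC (e, G.b e)) :=
        (z2_add_eq_zero _ _).1 h0
      show c (G.fC (e, kAdd p (G.b e))) = c (G.fC (e, p))
      rcases G.fC_pair e p with ⟨h1, h2⟩ | ⟨h1, h2⟩
      · rw [h1, h2, h0']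
      · rw [h1, h2, h0']
    have hcomp := hconn x y
    induction hcomp with
    | rel u v h =>
      rcases h with rfl | rfl | rfl
      · rw [G.fC_σ0]
      · exact (hstep u).symm
      · rw [G.fC_s1]
    | refl u => rfl
    | symm u v _ ih => exact ih.symm
    | trans u v w _ _ ih1 ih2 => exact ih1.trans ih2
  -- the constant maps
  set cV : ZMod 2 →ₗ[ZMod 2] (Quot G.vertStep → ZMod 2) :=
    LinearMap.pi (fun _ => LinearMap.id) with hcV
  set cF : ZMod 2 →ₗ[ZMod 2] (Face G → ZMod 2) :=
    LinearMap.pi (fun _ => LinearMap.id) with hcF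
  have hkerM : LinearMap.ker M.mulVecLin = LinearMap.range cV := by
    ext a
    simp only [LinearMap.mem_ker, LinearMap.mem_range]
    constructor
    · intro ha
      refine ⟨a (G.vC (e₀, (false, false))), funext fun v => ?_⟩
      induction v using Quot.ind with
      | _ z => exact (hvconst a ha z (e₀, (false, false))).symm
    · rintro ⟨r, rfl⟩
      funext e
      rw [Matrix.mulVecLin_apply, hMv]
      exact z2_add_self r
  have hkerN : LinearMap.ker N.mulVecLin = LinearMap.range cF := by
    ext c
    simp only [LinearMap.mem_ker, LinearMap.mem_range]
    constructor
    · intro hc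
      refine ⟨c (G.fC (e₀, (false, false))), funext fun v => ?_⟩
      induction v using Quot.ind with
      | _ z => exact (hfconst c hc z (e₀, (false, false))).symm
    · rintro ⟨r, rfl⟩
      funext e
      rw [Matrix.mulVecLin_apply, hNv]
      exact z2_add_self r
  have hrkcV : Module.finrank (ZMod 2) (LinearMap.range cV) = 1 := by
    have h := LinearMap.finrank_range_add_finrank_ker cV
    have hker : LinearMap.ker cV = ⊥ := by
      rw [Submodule.eq_bot_iff]
      intro r hr
      simpa [hcV] using congrFun (LinearMap.mem_ker.1 hr) (G.vC (e₀, (false, false)))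
    rw [hker, finrank_bot, Module.finrank_self] at h
    omega
  have hrkcF : Module.finrank (ZMod 2) (LinearMap.range cF) = 1 := by
    have h := LinearMap.finrank_range_add_finrank_ker cF
    have hker : LinearMap.ker cF = ⊥ := by
      rw [Submodule.eq_bot_iff]
      intro r hr
      simpa [hcF] using congrFun (LinearMap.mem_ker.1 hr) (G.fC (e₀, (false, false)))
    rw [hker, finrank_bot, Module.finrank_self] at h
    omega
  have hrkM : M.rank + 1 = Fintype.card (Quot G.vertStep) := by
    have h := LinearMap.finrank_range_add_finrank_ker M.mulVecLin
    rw [hkerM, hrkcV, Module.finrank_fintype_fun_eq_card] at h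
    exact h
  have hrkN : N.rank + 1 = Fintype.card (Face G) := by
    have h := LinearMap.finrank_range_add_finrank_ker N.mulVecLin
    rw [hkerN, hrkcF, Module.finrank_fintype_fun_eq_card] at h
    exact h
  set SS := LinearMap.ker (Mᵀ.mulVecLin) with hSSdef
  have hSS : Module.finrank (ZMod 2) SS + M.rank = Fintype.card E := by
    have h := LinearMap.finrank_range_add_finrank_ker (Mᵀ.mulVecLin)
    rw [Module.finrank_fintype_fun_eq_card] at h
    have h2 : Mᵀ.rank + Module.finrank (ZMod 2) SS = Fintype.card E := h
    rw [Matrix.rank_transpose] at h2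
    omega
  -- orthogonality: the range of the face map is contained in `SS`
  have hORTH : LinearMap.range N.mulVecLin ≤ SS := by
    rintro _ ⟨c, rfl⟩
    rw [hSSdef, LinearMap.mem_ker]
    rw [Matrix.mulVecLin_apply, Matrix.mulVecLin_apply]
    funext v
    have hexp : ∀ e : E, (N.mulVec c e) * M e v =
        ∑ p : Bool × Bool, c (G.fC (e, p)) * (if G.vC (e, p) = v then 1 else 0) := by
      intro e
      rw [ksum4 (G.a e) (G.b e) (G.a_ne e) (G.b_ne e) (G.ab_ne e)
        (fun p => c (G.fC (e, p)) * (if G.vC (e, p) = v then 1 else 0))]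
      have hfa : G.fC (e, G.a e) = G.fC (e, (false, false)) := by
        have := G.fC_adda e (false, false)
        rwa [kAdd_zero_left] at this
      have hfab : G.fC (e, kAdd (G.a e) (G.b e)) = G.fC (e, G.b e) := by
        have := G.fC_adda e (G.b e)
        rwa [kAdd_comm'] at this
      have hvb : G.vC (e, G.b e) = G.vC (e, (false, false)) := by
        have := G.vC_addb e (false, false)
        rwa [kAdd_zero_left] at this
      have hvab : G.vC (e, kAdd (G.a e) (G.b e)) = G.vC (e, G.a e) :=
        G.vC_addb e (G.a e)
      rw [hNv, hfa, hfab, hvb, hvab]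
      simp only [hM]
      rw [G.σ0_00, G.σ2_00]
      ring
    calc Mᵀ.mulVec (N.mulVec c) v
        = ∑ e : E, (N.mulVec c e) * M e v := by
          simp only [Matrix.mulVec, dotProduct, Matrix.transpose_apply]
          exact Finset.sum_congr rfl (fun e _ => mul_comm _ _)
      _ = ∑ x : Flags E, c (G.fC x) * (if G.vC x = v then 1 else 0) := by
          rw [Fintype.sum_prod_type]
          exact Finset.sum_congr rfl (fun e _ => hexp e)
      _ = 0 := G.s1_sum_zero _ (fun x => by rw [G.fC_s1, G.vC_s1])
  -- translations of the counts
  have hnV : G.nVerts = Fintype.card (Quot G.vertStep) :=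
    Nat.card_eq_fintype_card (α := Quot G.vertStep)
  have hnF : G.nFaces = Fintype.card (Face G) :=
    Nat.card_eq_fintype_card (α := Face G)
  have hnE : G.nEdges = Fintype.card E := Nat.card_eq_fintype_card (α := E)
  have hle : N.rank ≤ Module.finrank (ZMod 2) SS :=
    Submodule.finrank_mono hORTH
  constructor
  · rw [hnV, hnF, hnE]
    omega
  · intro heuler δ hflow
    have hEq : LinearMap.range N.mulVecLin = SS := by
      refine Submodule.eq_of_le_of_finrank_eq hORTH ?_
      rw [hnV, hnF, hnE] at heuler
      have : Module.finrank (ZMod 2) (LinearMap.range N.mulVecLin) = N.rank := rfl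
      omega
    have hδ : δ ∈ SS := by
      rw [hSSdef, LinearMap.mem_ker, Matrix.mulVecLin_apply]
      funext v
      have h1 : Mᵀ.mulVec δ v = ∑ e : E, δ e * M e v := by
        simp only [Matrix.mulVec, dotProduct, Matrix.transpose_apply]
        exact Finset.sum_congr rfl (fun e _ => mul_comm _ _)
      have h2 := hflow (fun w => if w = v then 1 else 0)
      calc Mᵀ.mulVec δ v = ∑ e : E, δ e * M e v := h1
        _ = ∑ e : E, δ e * ((if G.vC (e, (false, false)) = v then 1 else 0) +
              (if G.vC (G.σ0 (e, (false, false))) = v then 1 else 0)) := rfl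
        _ = 0 := h2
    rw [← hEq] at hδ
    obtain ⟨c, hc⟩ := hδ
    refine ⟨c, fun e => ?_⟩
    rw [← hc, Matrix.mulVecLin_apply]
    exact (hNv c e).symm

lemma kAdd_cancel_left : ∀ x y : Bool × Bool, kAdd x (kAdd x y) = y := by decide

lemma iota_inj : Function.Injective
    (![((0 : ZMod 2), (0 : ZMod 2)), (0, 1), (1, 0), (1, 1)] : Fin 4 → ZMod 2 × ZMod 2) := by
  decide

lemma kappa_inj : Function.Injective (fun p : ZMod 2 × ZMod 2 =>
    (if p = (0, 0) then (0 : Fin 4) else if p = (0, 1) then 1 else if p = (1, 0) then 2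
      else 3)) := by
  decide

/-- The key transfer: a proper `4`-colouring of the dual of some partial Petrial of a
connected plane graph yields a proper face `4`-colouring of the graph itself. -/
lemma colouring_of_petrial_dual [Fintype E] [DecidableEq E] (G : RibbonGraph E)
    (hconn : G.Connected) (hE : Nonempty E)
    (heuler : G.nVerts + G.nFaces = G.nEdges + 2)
    (hA : ∃ A : Finset E, ((G.petrial A).dualChrom).eval 4 ≠ 0) :
    ∃ c : Flags E → Fin 4,
      ∀ f, c (G.σ0 f) = c f ∧ c (G.s1 f) = c f ∧ c (G.σ2 f) ≠ c f := by
  classical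
  obtain ⟨A, hA⟩ := hA
  set H := G.petrial A with hH
  have hHσ2 : ∀ x, H.σ2 x = G.σ2 x := fun x => rfl
  have hHs1 : ∀ x, H.s1 x = G.s1 x := fun x => rfl
  -- extract a proper colouring of the dual graph of `H`
  rw [dualChrom] at hA
  by_cases hnl : ∃ g : Flags E, Quot.mk H.faceStep (H.σ2 g) = Quot.mk H.faceStep g
  · rw [if_pos hnl] at hA
    simp at hA
  rw [if_neg hnl] at hA
  push_neg at hnl
  have hcard : Nat.card {κ : Face H → Fin 4 // ∀ v w, H.dualGraph.Adj v w → κ v ≠ κ w} ≠ 0 := by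
    intro h0
    apply hA
    rw [show (4 : ℤ) = ((4 : ℕ) : ℤ) by norm_num, chromPoly_eval, h0]
    rfl
  obtain ⟨⟨colF, hcolF⟩⟩ := (Nat.card_ne_zero.1 hcard).1
  -- the induced flag colouring, constant on the faces of `H`
  set c : Flags E → Fin 4 := fun x => colF (H.fC x) with hcdef
  have hc0 : ∀ x, c (H.σ0 x) = c x := fun x => congrArg colF (H.fC_σ0 x)
  have hc1 : ∀ x, c (G.s1 x) = c x := fun x => congrArg colF (H.fC_s1 x)
  have hc2 : ∀ x, c (G.σ2 x) ≠ c x := by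
    intro x
    have hadj : H.dualGraph.Adj (H.fC x) (H.fC (H.σ2 x)) := by
      refine ⟨?_, x, rfl, rfl⟩
      intro h
      exact hnl x h.symm
    exact fun h => hcolF _ _ hadj ((congrArg c (hHσ2 x)).symm.trans h).symm
  -- pass to Klein-group values
  set ι : Fin 4 → ZMod 2 × ZMod 2 := ![(0, 0), (0, 1), (1, 0), (1, 1)] with hι
  set γ1 : Flags E → ZMod 2 := fun x => (ι (c x)).1 with hγ1
  set γ2 : Flags E → ZMod 2 := fun x => (ι (c x)).2 with hγ2
  set δ1 : E → ZMod 2 := fun e =>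
    γ1 (e, (false, false)) + γ1 (G.σ2 (e, (false, false))) with hδ1
  set δ2 : E → ZMod 2 := fun e =>
    γ2 (e, (false, false)) + γ2 (G.σ2 (e, (false, false))) with hδ2
  -- the flow condition, for any `H`-face-invariant flag function
  have hflow : ∀ γ : Flags E → ZMod 2, (∀ x, γ (H.σ0 x) = γ x) → (∀ x, γ (G.s1 x) = γ x) →
      ∀ a : Quot G.vertStep → ZMod 2,
        ∑ e : E, (γ (e, (false, false)) + γ (G.σ2 (e, (false, false)))) *
          (a (G.vC (e, (false, false))) + a (G.vC (G.σ0 (e, (false, false))))) = 0 := by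
    intro γ hγ0 hγ1' a
    have hexp : ∀ e : E, (γ (e, (false, false)) + γ (G.σ2 (e, (false, false)))) *
        (a (G.vC (e, (false, false))) + a (G.vC (G.σ0 (e, (false, false))))) =
        ∑ p : Bool × Bool, γ (e, p) * a (G.vC (e, p)) := by
      intro e
      rw [ksum4 (G.a e) (G.b e) (G.a_ne e) (G.b_ne e) (G.ab_ne e)
        (fun p => γ (e, p) * a (G.vC (e, p)))]
      have hvb : G.vC (e, G.b e) = G.vC (e, (false, false)) := by
        have := G.vC_addb e (false, false)
        rwa [kAdd_zero_left] at this
      have hvab : G.vC (e, kAdd (G.a e) (G.b e)) = G.vC (e, G.a e) :=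
        G.vC_addb e (G.a e)
      have hγinv : ∀ p, γ (e, kAdd p (H.a e)) = γ (e, p) := fun p => hγ0 (e, p)
      rw [G.σ2_00, G.σ0_00, hvb, hvab]
      by_cases he : e ∈ A
      · have haH : H.a e = kAdd (G.a e) (G.b e) := by
          show (if e ∈ A then kAdd (G.a e) (G.b e) else G.a e) = _
          rw [if_pos he]
        have hga : γ (e, G.a e) = γ (e, G.b e) := by
          have := hγinv (G.a e)
          rw [haH, kAdd_cancel_left] at this
          exact this.symm
        have hgab : γ (e, kAdd (G.a e) (G.b e)) = γ (e, (false, false)) := by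
          have := hγinv (false, false)
          rwa [haH, kAdd_zero_left] at this
        rw [hga, hgab]
        ring
      · have haH : H.a e = G.a e := by
          show (if e ∈ A then kAdd (G.a e) (G.b e) else G.a e) = _
          rw [if_neg he]
        have hga : γ (e, G.a e) = γ (e, (false, false)) := by
          have := hγinv (false, false)
          rwa [haH, kAdd_zero_left] at this
        have hgab : γ (e, kAdd (G.a e) (G.b e)) = γ (e, G.b e) := by
          have := hγinv (G.b e)
          rwa [haH, kAdd_comm'] at this
        rw [hga, hgab]
        ring
    calc ∑ e : E, (γ (e, (false, false)) + γ (G.σ2 (e, (false, false)))) *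
          (a (G.vC (e, (false, false))) + a (G.vC (G.σ0 (e, (false, false)))))
        = ∑ x : Flags E, γ x * a (G.vC x) := by
          rw [Fintype.sum_prod_type]
          exact Finset.sum_congr rfl (fun e _ => hexp e)
      _ = 0 := G.s1_sum_zero _ (fun x => by rw [G.vC_s1, hγ1' x])
  -- potentials
  have hγ1σ0 : ∀ x, γ1 (H.σ0 x) = γ1 x := fun x => by
    simp only [hγ1]
    rw [show c (H.σ0 x) = c x from hc0 x]
  have hγ2σ0 : ∀ x, γ2 (H.σ0 x) = γ2 x := fun x => by
    simp only [hγ2]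
    rw [show c (H.σ0 x) = c x from hc0 x]
  have hγ1s1 : ∀ x, γ1 (G.s1 x) = γ1 x := fun x => by
    simp only [hγ1]
    rw [show c (G.s1 x) = c x from hc1 x]
  have hγ2s1 : ∀ x, γ2 (G.s1 x) = γ2 x := fun x => by
    simp only [hγ2]
    rw [show c (G.s1 x) = c x from hc1 x]
  obtain ⟨c1, hpot1⟩ := (G.potential_core hconn hE).2 heuler δ1 (hflow γ1 hγ1σ0 hγ1s1)
  obtain ⟨c2, hpot2⟩ := (G.potential_core hconn hE).2 heuler δ2 (hflow γ2 hγ2σ0 hγ2s1)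
  -- assemble the colouring of `G`
  set κ : ZMod 2 × ZMod 2 → Fin 4 := fun p =>
    (if p = (0, 0) then (0 : Fin 4) else if p = (0, 1) then 1 else if p = (1, 0) then 2
      else 3) with hκ
  refine ⟨fun x => κ (c1 (G.fC x), c2 (G.fC x)), fun x => ?_⟩
  refine ⟨?_, ?_, ?_⟩
  · show κ (c1 (G.fC (G.σ0 x)), c2 (G.fC (G.σ0 x))) = κ (c1 (G.fC x), c2 (G.fC x))
    rw [G.fC_σ0]
  · show κ (c1 (G.fC (G.s1 x)), c2 (G.fC (G.s1 x))) = κ (c1 (G.fC x), c2 (G.fC x))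
    rw [G.fC_s1]
  -- the two sides of the edge get different potentials
  obtain ⟨e, p⟩ := x
  show κ (c1 (G.fC (G.σ2 (e, p))), c2 (G.fC (G.σ2 (e, p)))) ≠
    κ (c1 (G.fC (e, p)), c2 (G.fC (e, p)))
  have hδne : ¬(δ1 e = 0 ∧ δ2 e = 0) := by
    rintro ⟨h1, h2⟩
    have e1 : γ1 (e, (false, false)) = γ1 (G.σ2 (e, (false, false))) :=
      (z2_add_eq_zero _ _).1 h1
    have e2 : γ2 (e, (false, false)) = γ2 (G.σ2 (e, (false, false))) :=
      (z2_add_eq_zero _ _).1 h2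
    have : ι (c (e, (false, false))) = ι (c (G.σ2 (e, (false, false)))) :=
      Prod.ext e1 e2
    exact hc2 (e, (false, false)) (iota_inj this).symm
  have hswap : ∀ (cc : Face G → ZMod 2) (dd : E → ZMod 2),
      (∀ e' : E, cc (G.fC (e', (false, false))) +
        cc (G.fC (G.σ2 (e', (false, false)))) = dd e') →
      cc (G.fC (G.σ2 (e, p))) + cc (G.fC (e, p)) = dd e := by
    intro cc dd hp
    have hσ2p : G.σ2 (e, p) = (e, kAdd p (G.b e)) := rfl
    have hσ200 : G.fC (G.σ2 (e, (false, false))) = G.fC (e, G.b e) := by rw [G.σ2_00]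
    have hpe := hp e
    rw [hσ200] at hpe
    rcases G.fC_pair e p with ⟨h1, h2⟩ | ⟨h1, h2⟩
    · rw [hσ2p, h1, h2, add_comm]
      exact hpe
    · rw [hσ2p, h1, h2]
      exact hpe
  intro hEq
  have hpair : (c1 (G.fC (G.σ2 (e, p))), c2 (G.fC (G.σ2 (e, p)))) =
      (c1 (G.fC (e, p)), c2 (G.fC (e, p))) := kappa_inj hEq
  have h1 : c1 (G.fC (G.σ2 (e, p))) = c1 (G.fC (e, p)) := congrArg Prod.fst hpair
  have h2 : c2 (G.fC (G.σ2 (e, p))) = c2 (G.fC (e, p)) := congrArg Prod.snd hpair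
  apply hδne
  constructor
  · rw [← hswap c1 δ1 hpot1, h1]
    exact z2_add_self _
  · rw [← hswap c2 δ2 hpot2, h2]
    exact z2_add_self _


/-! #### Restriction to a union of components, and quotient decomposition -/

/-- Embedding of flags of a restricted edge set. -/
def embF {P : E → Prop} (f : Flags {e : E // P e}) : Flags E := (f.1.1, f.2)

lemma embF_inj {P : E → Prop} : Function.Injective (embF (E := E) (P := P)) := by
  rintro ⟨⟨x, hx⟩, p⟩ ⟨⟨y, hy⟩, q⟩ h
  simp only [embF, Prod.mk.injEq] at h
  obtain ⟨h1, h2⟩ := h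
  subst h1; subst h2; rfl

/-- Restriction of a ribbon graph to a set of edges closed under `s1`. -/
def restrict (G : RibbonGraph E) (P : E → Prop)
    (hP : ∀ f : Flags E, P f.1 → P (G.s1 f).1) : RibbonGraph {e : E // P e} where
  s1 f := (⟨(G.s1 (embF f)).1, hP (embF f) f.1.2⟩, (G.s1 (embF f)).2)
  s1_invol f := embF_inj (G.s1_invol (embF f))
  s1_ne f h := G.s1_ne (embF f) (congrArg embF h)
  a e := G.a e.1
  b e := G.b e.1
  a_ne e := G.a_ne e.1
  b_ne e := G.b_ne e.1
  ab_ne e := G.ab_ne e.1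

lemma embF_s1 (G : RibbonGraph E) (P : E → Prop) (hP : ∀ f : Flags E, P f.1 → P (G.s1 f).1)
    (f : Flags {e : E // P e}) : embF ((G.restrict P hP).s1 f) = G.s1 (embF f) := rfl

lemma embF_σ0 (G : RibbonGraph E) (P : E → Prop) (hP : ∀ f : Flags E, P f.1 → P (G.s1 f).1)
    (f : Flags {e : E // P e}) : embF ((G.restrict P hP).σ0 f) = G.σ0 (embF f) := rfl

lemma embF_σ2 (G : RibbonGraph E) (P : E → Prop) (hP : ∀ f : Flags E, P f.1 → P (G.s1 f).1)
    (f : Flags {e : E // P e}) : embF ((G.restrict P hP).σ2 f) = G.σ2 (embF f) := rfl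

/-- A quotient by a relation compatible with a partition decomposes as a sigma type. -/
def quotSigmaEquiv {α ι : Type*} (cls : α → ι) (r : α → α → Prop)
    (hr : ∀ x y, r x y → cls x = cls y) :
    Quot r ≃ Σ i : ι, Quot (fun x y : {a : α // cls a = i} => r x.1 y.1) := by
  have aux : ∀ {i j : ι} (_ : i = j) (u : {a : α // cls a = i}) (v : {a : α // cls a = j}),
      r u.1 v.1 →
      (⟨i, Quot.mk _ u⟩ : Σ i : ι, Quot (fun x y : {a : α // cls a = i} => r x.1 y.1)) =
        ⟨j, Quot.mk _ v⟩ := by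
    rintro i j rfl u v huv
    exact congrArg (Sigma.mk i) (Quot.sound huv)
  have aux2 : ∀ {i j : ι} (_ : i = j) (u : {a : α // cls a = i}) (v : {a : α // cls a = j}),
      u.1 = v.1 →
      (⟨i, Quot.mk _ u⟩ : Σ i : ι, Quot (fun x y : {a : α // cls a = i} => r x.1 y.1)) =
        ⟨j, Quot.mk _ v⟩ := by
    rintro i j rfl u v huv
    exact congrArg (Sigma.mk i) (congrArg (Quot.mk _) (Subtype.ext huv))
  exact
    { toFun := Quot.lift (fun x => ⟨cls x, Quot.mk _ ⟨x, rfl⟩⟩)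
        (fun x y hxy => aux (hr x y hxy) ⟨x, rfl⟩ ⟨y, rfl⟩ hxy)
      invFun := fun s => Quot.lift (fun (u : {a : α // cls a = s.1}) => Quot.mk r u.1)
        (fun u v huv => Quot.sound huv) s.2
      left_inv := by
        intro q
        induction q using Quot.ind with
        | _ x => rfl
      right_inv := by
        rintro ⟨i, q⟩
        induction q using Quot.ind with
        | _ u => exact aux2 u.2 ⟨u.1, rfl⟩ u rfl }

lemma nat_card_quot_sigma {α ι : Type*} [Finite α] [Fintype ι] (cls : α → ι)
    (r : α → α → Prop) (hr : ∀ x y, r x y → cls x = cls y) :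
    Nat.card (Quot r) =
      ∑ i : ι, Nat.card (Quot (fun x y : {a : α // cls a = i} => r x.1 y.1)) := by
  classical
  rw [Nat.card_congr (quotSigmaEquiv cls r hr)]
  letI : ∀ i : ι, Fintype (Quot (fun x y : {a : α // cls a = i} => r x.1 y.1)) :=
    fun i => Fintype.ofFinite _
  rw [Nat.card_eq_fintype_card, Fintype.card_sigma]
  exact Finset.sum_congr rfl (fun i _ => (Nat.card_eq_fintype_card).symm)

/-- The equivalence between a fiber of flags and the flags of the restricted edge set. -/
def fiberFlagsEquiv {P : E → Prop} :
    {x : Flags E // P x.1} ≃ Flags {e : E // P e} where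
  toFun x := (⟨x.1.1, x.2⟩, x.1.2)
  invFun f := ⟨(f.1.1, f.2), f.1.2⟩
  left_inv x := rfl
  right_inv f := rfl


section Match

variable (G : RibbonGraph E) {P : E → Prop} (hP : ∀ f : Flags E, P f.1 → P (G.s1 f).1)

lemma restrict_vertStep_iff (x y : Flags {e : E // P e}) :
    G.vertStep (embF x) (embF y) ↔ (G.restrict P hP).vertStep x y := by
  unfold vertStep
  constructor
  · rintro (h | h)
    · left; apply embF_inj; rw [embF_σ2]; exact h
    · right; apply embF_inj; rw [embF_s1]; exact h
  · rintro (h | h)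
    · left; have := congrArg embF h; rwa [embF_σ2] at this
    · right; have := congrArg embF h; rwa [embF_s1] at this

lemma restrict_faceStep_iff (x y : Flags {e : E // P e}) :
    G.faceStep (embF x) (embF y) ↔ (G.restrict P hP).faceStep x y := by
  unfold faceStep
  constructor
  · rintro (h | h)
    · left; apply embF_inj; rw [embF_σ0]; exact h
    · right; apply embF_inj; rw [embF_s1]; exact h
  · rintro (h | h)
    · left; have := congrArg embF h; rwa [embF_σ0] at this
    · right; have := congrArg embF h; rwa [embF_s1] at this

lemma restrict_compStep_iff (x y : Flags {e : E // P e}) :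
    G.compStep (embF x) (embF y) ↔ (G.restrict P hP).compStep x y := by
  unfold compStep
  constructor
  · rintro (h | h | h)
    · exact Or.inl (embF_inj (by rw [embF_σ0]; exact h))
    · exact Or.inr (Or.inl (embF_inj (by rw [embF_σ2]; exact h)))
    · exact Or.inr (Or.inr (embF_inj (by rw [embF_s1]; exact h)))
  · rintro (h | h | h)
    · exact Or.inl (by have := congrArg embF h; rwa [embF_σ0] at this)
    · exact Or.inr (Or.inl (by have := congrArg embF h; rwa [embF_σ2] at this))
    · exact Or.inr (Or.inr (by have := congrArg embF h; rwa [embF_s1] at this))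

lemma restrict_compStepDel_iff (e' : {e : E // P e}) (x y : Flags {e : E // P e}) :
    G.compStepDel e'.1 (embF x) (embF y) ↔ (G.restrict P hP).compStepDel e' x y := by
  unfold compStepDel
  constructor
  · rintro (⟨hne, h⟩ | h | h)
    · refine Or.inl ⟨fun hc => hne (congrArg Subtype.val hc), ?_⟩
      apply embF_inj; rw [embF_σ0]; exact h
    · exact Or.inr (Or.inl (embF_inj (by rw [embF_σ2]; exact h)))
    · exact Or.inr (Or.inr (embF_inj (by rw [embF_s1]; exact h)))
  · rintro (⟨hne, h⟩ | h | h)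
    · refine Or.inl ⟨fun hc => hne (Subtype.ext hc), ?_⟩
      have := congrArg embF h; rwa [embF_σ0] at this
    · exact Or.inr (Or.inl (by have := congrArg embF h; rwa [embF_σ2] at this))
    · exact Or.inr (Or.inr (by have := congrArg embF h; rwa [embF_s1] at this))

lemma restrict_compStepDel_other_iff (e' : E) (he : ¬ P e') (x y : Flags {e : E // P e}) :
    G.compStepDel e' (embF x) (embF y) ↔ (G.restrict P hP).compStep x y := by
  rw [← restrict_compStep_iff G hP]
  unfold compStepDel compStep
  constructor
  · rintro (⟨hne, h⟩ | h | h)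
    · exact Or.inl h
    · exact Or.inr (Or.inl h)
    · exact Or.inr (Or.inr h)
  · rintro (h | h | h)
    · exact Or.inl ⟨fun hc => he (hc ▸ x.1.2), h⟩
    · exact Or.inr (Or.inl h)
    · exact Or.inr (Or.inr h)

end Match

section Components

variable (G : RibbonGraph E)

/-- The partition of the edges into connected components. -/
def eSetoid : Setoid E where
  r e e' := Relation.EqvGen G.compStep (e, (false, false)) (e', (false, false))
  iseqv := ⟨fun _ => Relation.EqvGen.refl _, fun h => Relation.EqvGen.symm _ _ h,
    fun h h' => Relation.EqvGen.trans _ _ _ h h'⟩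

lemma flag_conn_base : ∀ x : Flags E,
    Relation.EqvGen G.compStep (x.1, (false, false)) x := by
  rintro ⟨e, p⟩
  show Relation.EqvGen G.compStep (e, (false, false)) (e, p)
  rcases kcases (G.a e) (G.b e) p (G.a_ne e) (G.b_ne e) (G.ab_ne e) with rfl | rfl | rfl | rfl
  · exact Relation.EqvGen.refl _
  · exact Relation.EqvGen.rel _ _ (Or.inl (G.σ0_00 e).symm)
  · exact Relation.EqvGen.rel _ _ (Or.inr (Or.inl (G.σ2_00 e).symm))
  · refine Relation.EqvGen.trans _ _ _
      (Relation.EqvGen.rel _ _ (Or.inr (Or.inl (G.σ2_00 e).symm)))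
      (Relation.EqvGen.rel _ _ (Or.inl ?_))
    show (e, kAdd (G.a e) (G.b e)) = (e, kAdd (G.b e) (G.a e))
    rw [kAdd_comm']

lemma eCls_step : ∀ x y : Flags E, G.compStep x y →
    Quotient.mk G.eSetoid x.1 = Quotient.mk G.eSetoid y.1 := by
  intro x y h
  apply Quotient.sound
  show Relation.EqvGen G.compStep (x.1, (false, false)) (y.1, (false, false))
  exact Relation.EqvGen.trans _ _ _ (G.flag_conn_base x)
    (Relation.EqvGen.trans _ _ _ (Relation.EqvGen.rel _ _ h)
      (Relation.EqvGen.symm _ _ (G.flag_conn_base y)))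

lemma eCls_eqvGen : ∀ x y : Flags E, Relation.EqvGen G.compStep x y →
    Quotient.mk G.eSetoid x.1 = Quotient.mk G.eSetoid y.1 := by
  intro x y h
  induction h with
  | rel u v h => exact G.eCls_step u v h
  | refl u => rfl
  | symm u v _ ih => exact ih.symm
  | trans u v w _ _ ih1 ih2 => exact ih1.trans ih2

lemma comp_closed (i : Quotient G.eSetoid) :
    ∀ f : Flags E, Quotient.mk G.eSetoid f.1 = i → Quotient.mk G.eSetoid (G.s1 f).1 = i :=
  fun f hf => (G.eCls_step f (G.s1 f) (Or.inr (Or.inr rfl))).symm.trans hf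

/-- The connected component of `G` indexed by `i`. -/
def comp (i : Quotient G.eSetoid) :
    RibbonGraph {e : E // Quotient.mk G.eSetoid e = i} :=
  G.restrict _ (G.comp_closed i)

end Components


section Decomp

open scoped Classical

lemma nat_card_fiber_sum {α ι : Type*} [Finite α] [Fintype ι] (f : α → ι) :
    Nat.card α = ∑ i : ι, Nat.card {a : α // f a = i} := by
  classical
  rw [← Nat.card_congr (Equiv.sigmaFiberEquiv f)]
  letI : ∀ i : ι, Fintype {a : α // f a = i} := fun i => Fintype.ofFinite _
  rw [Nat.card_eq_fintype_card, Fintype.card_sigma]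
  exact Finset.sum_congr rfl (fun i _ => (Nat.card_eq_fintype_card).symm)

lemma card_decomp [Fintype E] (G : RibbonGraph E) [Fintype (Quotient G.eSetoid)]
    (r : Flags E → Flags E → Prop)
    (hr : ∀ x y, r x y → Quotient.mk G.eSetoid x.1 = Quotient.mk G.eSetoid y.1)
    (r' : ∀ i : Quotient G.eSetoid,
      Flags {e : E // Quotient.mk G.eSetoid e = i} →
        Flags {e : E // Quotient.mk G.eSetoid e = i} → Prop)
    (hmatch : ∀ i x y, r (embF x) (embF y) ↔ r' i x y) :
    Nat.card (Quot r) = ∑ i, Nat.card (Quot (r' i)) := by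
  rw [nat_card_quot_sigma (fun x : Flags E => Quotient.mk G.eSetoid x.1) r hr]
  refine Finset.sum_congr rfl (fun i _ => ?_)
  refine Nat.card_congr
    (Quot.congr (fiberFlagsEquiv (P := fun e => Quotient.mk G.eSetoid e = i)) ?_)
  intro u v
  exact hmatch i (fiberFlagsEquiv u) (fiberFlagsEquiv v)

variable [Fintype E] (G : RibbonGraph E) [Fintype (Quotient G.eSetoid)]

lemma nVerts_decomp : G.nVerts = ∑ i, (G.comp i).nVerts :=
  card_decomp G G.vertStep
    (fun x y h => G.eCls_step x y
      (by rcases h with h | h; exacts [Or.inr (Or.inl h), Or.inr (Or.inr h)]))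
    (fun i => (G.comp i).vertStep)
    (fun i x y => restrict_vertStep_iff G (G.comp_closed i) x y)

lemma nFaces_decomp : G.nFaces = ∑ i, (G.comp i).nFaces :=
  card_decomp G G.faceStep
    (fun x y h => G.eCls_step x y
      (by rcases h with h | h; exacts [Or.inl h, Or.inr (Or.inr h)]))
    (fun i => (G.comp i).faceStep)
    (fun i x y => restrict_faceStep_iff G (G.comp_closed i) x y)

lemma nComps_decomp : G.nComps = ∑ i, (G.comp i).nComps :=
  card_decomp G G.compStep (fun x y h => G.eCls_step x y h)
    (fun i => (G.comp i).compStep)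
    (fun i x y => restrict_compStep_iff G (G.comp_closed i) x y)

lemma nEdges_decomp : G.nEdges = ∑ i, (G.comp i).nEdges :=
  nat_card_fiber_sum (fun e : E => Quotient.mk G.eSetoid e)

lemma nCompsDel_decomp (ee : E) :
    G.nCompsDel ee = ∑ i, (if h : Quotient.mk G.eSetoid ee = i
      then (G.comp i).nCompsDel ⟨ee, h⟩ else (G.comp i).nComps) := by
  classical
  unfold nCompsDel
  rw [card_decomp G (G.compStepDel ee)
    (fun x y h => G.eCls_step x y
      (by rcases h with ⟨_, h⟩ | h | h;
          exacts [Or.inl h, Or.inr (Or.inl h), Or.inr (Or.inr h)]))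
    (fun i x y => G.compStepDel ee (embF x) (embF y))
    (fun i x y => Iff.rfl)]
  refine Finset.sum_congr rfl (fun i _ => ?_)
  by_cases h : Quotient.mk G.eSetoid ee = i
  · rw [dif_pos h]
    refine Nat.card_congr (Quot.congrRight ?_)
    intro x y
    exact restrict_compStepDel_iff G (G.comp_closed i) ⟨ee, h⟩ x y
  · rw [dif_neg h]
    refine Nat.card_congr (Quot.congrRight ?_)
    intro x y
    exact restrict_compStepDel_other_iff G (G.comp_closed i) ee h x y

lemma comp_connected (i : Quotient G.eSetoid) : (G.comp i).Connected := by
  have key : ∀ x y : Flags E, Relation.EqvGen G.compStep x y →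
      ∀ (hx : Quotient.mk G.eSetoid x.1 = i) (hy : Quotient.mk G.eSetoid y.1 = i),
      Relation.EqvGen (G.comp i).compStep
        (fiberFlagsEquiv ⟨x, hx⟩) (fiberFlagsEquiv ⟨y, hy⟩) := by
    intro x y h
    induction h with
    | rel u v huv =>
      intro hx hy
      exact Relation.EqvGen.rel _ _
        ((restrict_compStep_iff G (G.comp_closed i)
          (fiberFlagsEquiv ⟨u, hx⟩) (fiberFlagsEquiv ⟨v, hy⟩)).1 huv)
    | refl u => intro hx hy; exact Relation.EqvGen.refl _
    | symm u v huv ih => intro hx hy; exact Relation.EqvGen.symm _ _ (ih hy hx)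
    | trans u v w h1 h2 ih1 ih2 =>
      intro hx hy
      have hv : Quotient.mk G.eSetoid v.1 = i := (G.eCls_eqvGen u v h1).symm.trans hx
      exact Relation.EqvGen.trans _ _ _ (ih1 hx hv) (ih2 hv hy)
  intro x y
  have hx := fiberFlagsEquiv.apply_symm_apply x
  have hy := fiberFlagsEquiv.apply_symm_apply y
  set ux := fiberFlagsEquiv.symm x with hux
  set uy := fiberFlagsEquiv.symm y with huy
  have h1 : Relation.EqvGen G.compStep ux.1 uy.1 := by
    refine Relation.EqvGen.trans _ _ _
      (Relation.EqvGen.symm _ _ (G.flag_conn_base ux.1)) ?_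
    refine Relation.EqvGen.trans _ _ _ ?_ (G.flag_conn_base uy.1)
    exact Quotient.exact (ux.2.trans uy.2.symm)
  have := key ux.1 uy.1 h1 ux.2 uy.2
  rwa [show (⟨ux.1, ux.2⟩ : {z : Flags E // Quotient.mk G.eSetoid z.1 = i}) = ux from rfl,
    show (⟨uy.1, uy.2⟩ : {z : Flags E // Quotient.mk G.eSetoid z.1 = i}) = uy from rfl,
    hx, hy] at this

lemma comp_edge_nonempty (i : Quotient G.eSetoid) :
    Nonempty {e : E // Quotient.mk G.eSetoid e = i} := by
  obtain ⟨e, he⟩ := i.exists_rep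
  exact ⟨⟨e, he⟩⟩

lemma comp_nComps_one (i : Quotient G.eSetoid) : (G.comp i).nComps = 1 := by
  obtain ⟨ee⟩ := G.comp_edge_nonempty i
  haveI : Nonempty (Quot (G.comp i).compStep) := ⟨Quot.mk _ (ee, (false, false))⟩
  haveI : Subsingleton (Quot (G.comp i).compStep) := by
    constructor
    intro q1 q2
    induction q1 using Quot.ind with
    | _ x =>
      induction q2 using Quot.ind with
      | _ y => exact Quot.eqvGen_sound (G.comp_connected i x y)
  exact Nat.card_unique

lemma restrict_orientable {P : E → Prop} (hP : ∀ f : Flags E, P f.1 → P (G.s1 f).1)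
    (ho : G.Orientable) : (G.restrict P hP).Orientable := by
  obtain ⟨o, ho⟩ := ho
  refine ⟨fun f => o (embF f), fun f => ⟨?_, ?_, ?_⟩⟩
  · show o (embF ((G.restrict P hP).σ0 f)) = !(o (embF f))
    rw [embF_σ0]; exact (ho (embF f)).1
  · show o (embF ((G.restrict P hP).σ2 f)) = !(o (embF f))
    rw [embF_σ2]; exact (ho (embF f)).2.1
  · show o (embF ((G.restrict P hP).s1 f)) = !(o (embF f))
    rw [embF_s1]; exact (ho (embF f)).2.2

lemma comp_euler (hpl : G.nVerts + G.nFaces = G.nEdges + 2 * G.nComps)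
    (i : Quotient G.eSetoid) :
    (G.comp i).nVerts + (G.comp i).nFaces = (G.comp i).nEdges + 2 := by
  classical
  have hle : ∀ j : Quotient G.eSetoid,
      (G.comp j).nVerts + (G.comp j).nFaces ≤ (G.comp j).nEdges + 2 := by
    intro j
    haveI := G.comp_edge_nonempty j
    exact ((G.comp j).potential_core (G.comp_connected j) inferInstance).1
  have hsum : ∑ j : Quotient G.eSetoid, ((G.comp j).nVerts + (G.comp j).nFaces) =
      ∑ j : Quotient G.eSetoid, ((G.comp j).nEdges + 2) := by
    rw [Finset.sum_add_distrib, Finset.sum_add_distrib, ← G.nVerts_decomp, ← G.nFaces_decomp,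
      ← G.nEdges_decomp]
    have hC : G.nComps = ∑ _j : Quotient G.eSetoid, 1 := by
      rw [G.nComps_decomp]
      exact Finset.sum_congr rfl (fun j _ => G.comp_nComps_one j)
    have : ∑ _j : Quotient G.eSetoid, (2 : ℕ) =
        2 * ∑ _j : Quotient G.eSetoid, 1 := by
      rw [Finset.mul_sum]
      exact Finset.sum_congr rfl (fun j _ => rfl)
    rw [this, ← hC]
    exact hpl
  exact (Finset.sum_eq_sum_iff_of_le (fun j _ => hle j)).1 hsum i (Finset.mem_univ i)

lemma comp_not_bridge (hbr : ∀ e, ¬ G.IsBridge e) (i : Quotient G.eSetoid)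
    (ee : {e : E // Quotient.mk G.eSetoid e = i}) : ¬ (G.comp i).IsBridge ee := by
  classical
  intro hbridge
  apply hbr ee.1
  unfold IsBridge at hbridge ⊢
  rw [G.nComps_decomp, G.nCompsDel_decomp ee.1]
  rw [← Finset.add_sum_erase _ (fun j => (G.comp j).nComps) (Finset.mem_univ i),
    ← Finset.add_sum_erase _ (fun j => if h : Quotient.mk G.eSetoid ee.1 = j
      then (G.comp j).nCompsDel ⟨ee.1, h⟩ else (G.comp j).nComps) (Finset.mem_univ i)]
  have hoff : ∀ j ∈ Finset.univ.erase i,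
      (if h : Quotient.mk G.eSetoid ee.1 = j
        then (G.comp j).nCompsDel ⟨ee.1, h⟩ else (G.comp j).nComps) = (G.comp j).nComps := by
    intro j hj
    rw [dif_neg]
    rw [ee.2]
    exact (Finset.mem_erase.1 hj).1.symm
  rw [Finset.sum_congr rfl hoff]
  have hi : (if h : Quotient.mk G.eSetoid ee.1 = i
      then (G.comp i).nCompsDel ⟨ee.1, h⟩ else (G.comp i).nComps) =
      (G.comp i).nCompsDel ee := by
    rw [dif_pos ee.2]
  rw [hi]
  omega

end Decomp

end Aux

/-- The Four Colour Theorem (stated in its face-colouring form: every bridgeless plane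
graph admits a proper face 4-colouring) is equivalent to: for every connected,
bridgeless plane graph `G` there exists `A ⊆ E(G)` with `χ((G^{τ(A)})*;4) ≠ 0`. -/
theorem stmt19 :
    (∀ (E : Type) [Fintype E] [DecidableEq E] (G : RibbonGraph E), G.Plane →
        (∀ e, ¬ G.IsBridge e) →
        ∃ c : Flags E → Fin 4,
          ∀ f, c (G.σ0 f) = c f ∧ c (G.s1 f) = c f ∧ c (G.σ2 f) ≠ c f) ↔
      (∀ (E : Type) [Fintype E] [DecidableEq E] (G : RibbonGraph E), G.Plane →
        G.Connected → (∀ e, ¬ G.IsBridge e) →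
        ∃ A : Finset E, ((G.petrial A).dualChrom).eval 4 ≠ 0) := by
  constructor
  · intro lhs E _ _ G hPlane _hconn hbr
    refine ⟨∅, ?_⟩
    rw [petrial_empty]
    exact dualChrom_ne_zero_of_colouring G (lhs E G hPlane hbr)
  · intro rhs E instF instD G hPlane hbr
    classical
    by_cases hE : Nonempty E
    · letI : Fintype (Quotient G.eSetoid) := Fintype.ofFinite _
      have hcol : ∀ i : Quotient G.eSetoid,
          ∃ c : Flags {e : E // Quotient.mk G.eSetoid e = i} → Fin 4,
            ∀ f, c ((G.comp i).σ0 f) = c f ∧ c ((G.comp i).s1 f) = c f ∧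
              c ((G.comp i).σ2 f) ≠ c f := by
        intro i
        haveI := G.comp_edge_nonempty i
        have hconn := G.comp_connected i
        have heuler := G.comp_euler hPlane.2 i
        have hplane_i : (G.comp i).Plane := by
          refine ⟨G.restrict_orientable _ hPlane.1, ?_⟩
          rw [G.comp_nComps_one i]
          omega
        have hbr_i := G.comp_not_bridge hbr i
        have hA := rhs _ (G.comp i) hplane_i hconn hbr_i
        exact colouring_of_petrial_dual (G.comp i) hconn inferInstance heuler hA
      choose col hcolspec using hcol
      set F : Flags E → Fin 4 := fun x => col (Quotient.mk G.eSetoid x.1)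
        (fiberFlagsEquiv ⟨x, rfl⟩) with hF
      have htrans : ∀ (z : Flags E) (j : Quotient G.eSetoid)
          (hz : Quotient.mk G.eSetoid z.1 = j),
          F z = col j (fiberFlagsEquiv ⟨z, hz⟩) := by
        intro z j hz
        subst hz
        rfl
      refine ⟨F, fun x => ?_⟩
      set i := Quotient.mk G.eSetoid x.1 with hi
      have hx : Quotient.mk G.eSetoid x.1 = i := rfl
      refine ⟨?_, ?_, ?_⟩
      · rw [htrans (G.σ0 x) i rfl, htrans x i hx]
        rw [show fiberFlagsEquiv (⟨G.σ0 x, rfl⟩ :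
            {z : Flags E // Quotient.mk G.eSetoid z.1 = i}) =
            (G.comp i).σ0 (fiberFlagsEquiv ⟨x, hx⟩) from embF_inj rfl]
        exact (hcolspec i _).1
      · have hs1 : Quotient.mk G.eSetoid (G.s1 x).1 = i :=
          (G.eCls_step x (G.s1 x) (Or.inr (Or.inr rfl))).symm.trans hx
        rw [htrans (G.s1 x) i hs1, htrans x i hx]
        rw [show fiberFlagsEquiv (⟨G.s1 x, hs1⟩ :
            {z : Flags E // Quotient.mk G.eSetoid z.1 = i}) =
            (G.comp i).s1 (fiberFlagsEquiv ⟨x, hx⟩) from embF_inj rfl]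
        exact (hcolspec i _).2.1
      · rw [htrans (G.σ2 x) i rfl, htrans x i hx]
        rw [show fiberFlagsEquiv (⟨G.σ2 x, rfl⟩ :
            {z : Flags E // Quotient.mk G.eSetoid z.1 = i}) =
            (G.comp i).σ2 (fiberFlagsEquiv ⟨x, hx⟩) from embF_inj rfl]
        exact (hcolspec i _).2.2
    · exact ⟨fun _ => 0, fun f => (hE ⟨f.1⟩).elim⟩

end RibbonGraph

end Penrose
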